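/- arXiv:2108.00790 — 3 statements merged into one kernel-verified Lean document; each statement's English description precedes it below -/
import Mathlib

section
/- With G, σ, Y, μ, e, g, C, d, ν as above (C abelian, d = g·σ(g) ∈ C, ν(c) = g σ(c) g⁻¹, ν² = id): if Y has a μ-fixed point, then d lies in the subgroup {c' · ν(c') | c' ∈ C} of C^ν; that is, the class of d in H² := C^ν / {c'·ν(c')} is trivial. -/
/-- With G acting transitively on Y, compatible involutions σ, μ,
e ∈ Y, g with e = g·μ(e), C = Stab_G(e) abelian, d = g·σ(g), ν(c) = g·σ(c)·g⁻¹: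
if Y has a μ-fixed point then d lies in {c'·ν(c') | c' ∈ C}, i.e. the class
of d in H²(C, ν) is trivial. -/
theorem class_trivial_of_fixed_point {G Y : Type*} [Group G] [MulAction G Y]
    (σ : G →* G) (hσ : ∀ g, σ (σ g) = g)
    (μ : Y → Y) (hμ : ∀ y, μ (μ y) = y)
    (hcompat : ∀ (g : G) (y : Y), μ (g • y) = σ g • μ y)
    (htrans : ∀ y y' : Y, ∃ g : G, g • y = y')
    (e : Y) (g : G) (hg : e = g • μ e)
    (habC : ∀ c c' : G, c • e = e → c' • e = e → c * c' = c' * c)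
    (hfix : ∃ y : Y, μ y = y) :
    ∃ c : G, c • e = e ∧ g * σ g = c * (g * σ c * g⁻¹) := by
  obtain ⟨y, hy⟩ := hfix
  obtain ⟨h, hh⟩ := htrans y e
  have hμe : μ e = σ h • y := by rw [← hh, hcompat, hy]
  have hinv : h⁻¹ • e = y := by rw [← hh, inv_smul_smul]
  refine ⟨g * σ h * h⁻¹, ?_, ?_⟩
  · rw [mul_smul, mul_smul, hinv, ← hμe, ← hg]
  · -- k = h⁻¹ * g * σ h stabilizes y
    have hk : (h⁻¹ * g * σ h) • y = y := by
      rw [mul_smul, mul_smul, ← hμe, ← hg, hinv]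
    have hσk : σ (h⁻¹ * g * σ h) • y = y := by
      have := hcompat (h⁻¹ * g * σ h) y
      rw [hk, hy] at this
      exact this.symm
    -- conjugates by h stabilize e, hence commute
    have hstab : ∀ a : G, a • y = y → (h * a * h⁻¹) • e = e := by
      intro a ha
      rw [mul_smul, mul_smul, hinv, ha, hh]
    have hcomm := habC _ _ (hstab _ hk) (hstab _ hσk)
    have hcomm2 : h * ((h⁻¹ * g * σ h) * σ (h⁻¹ * g * σ h)) * h⁻¹ =
        h * (σ (h⁻¹ * g * σ h) * (h⁻¹ * g * σ h)) * h⁻¹ := by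
      rw [show h * ((h⁻¹ * g * σ h) * σ (h⁻¹ * g * σ h)) * h⁻¹ =
        (h * (h⁻¹ * g * σ h) * h⁻¹) * (h * σ (h⁻¹ * g * σ h) * h⁻¹) by group,
        show h * (σ (h⁻¹ * g * σ h) * (h⁻¹ * g * σ h)) * h⁻¹ =
        (h * σ (h⁻¹ * g * σ h) * h⁻¹) * (h * (h⁻¹ * g * σ h) * h⁻¹) by group]
      exact hcomm
    have hcomm' : (h⁻¹ * g * σ h) * σ (h⁻¹ * g * σ h) =
        σ (h⁻¹ * g * σ h) * (h⁻¹ * g * σ h) :=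
      mul_left_cancel (mul_right_cancel hcomm2)
    have hσk' : σ (h⁻¹ * g * σ h) = (σ h)⁻¹ * σ g * h := by
      simp [map_mul, map_inv, hσ]
    rw [hσk'] at hcomm'
    have key : h⁻¹ * (g * σ g) * h = (σ h)⁻¹ * (σ g * g) * σ h := by
      calc h⁻¹ * (g * σ g) * h
          = (h⁻¹ * g * σ h) * ((σ h)⁻¹ * σ g * h) := by group
        _ = ((σ h)⁻¹ * σ g * h) * (h⁻¹ * g * σ h) := hcomm'
        _ = (σ h)⁻¹ * (σ g * g) * σ h := by group
    have hσc : σ (g * σ h * h⁻¹) = σ g * h * (σ h)⁻¹ := by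
      simp [map_mul, map_inv, hσ]
    rw [hσc]
    calc g * σ g
        = g * σ h * ((σ h)⁻¹ * (σ g * g) * σ h) * (σ h)⁻¹ * g⁻¹ := by group
      _ = g * σ h * (h⁻¹ * (g * σ g) * h) * (σ h)⁻¹ * g⁻¹ := by rw [key]
      _ = g * σ h * h⁻¹ * (g * (σ g * h * (σ h)⁻¹) * g⁻¹) := by group
end

section
/- With the same setup (G acting transitively on Y with compatible involutions σ, μ; e ∈ Y; g ∈ G with e = g·μ(e); C = Stab_G(e) abelian; d = g·σ(g); ν(c) = gσ(c)g⁻¹): if d = (c · ν(c))⁻¹ for some c ∈ C, and moreover every 1-cocycle in G is a coboundary (i.e. for every g' ∈ G with g'·σ(g') = 1 there exists u ∈ G with u⁻¹ g' σ(u) = 1), then Y has a μ-fixed point. -/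
/-- Same setup: G acts transitively on Y with compatible
involutions σ, μ; e ∈ Y; g ∈ G with e = g·μ(e); C = Stab_G(e) abelian;
d = g·σ(g); ν(c) = g·σ(c)·g⁻¹. If d = (c·ν(c))⁻¹ for some c ∈ C, and every
1-cocycle in G is a coboundary (∀ g' with g'·σ(g') = 1 ∃ u with
u⁻¹·g'·σ(u) = 1), then Y has a μ-fixed point. -/
theorem fixed_point_of_trivial_class {G Y : Type*} [Group G] [MulAction G Y]
    (σ : G →* G) (hσ : ∀ g, σ (σ g) = g)
    (μ : Y → Y) (hμ : ∀ y, μ (μ y) = y)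
    (hcompat : ∀ (g : G) (y : Y), μ (g • y) = σ g • μ y)
    (htrans : ∀ y y' : Y, ∃ g : G, g • y = y')
    (e : Y) (g : G) (hg : e = g • μ e)
    (habC : ∀ c c' : G, c • e = e → c' • e = e → c * c' = c' * c)
    (c : G) (hc : c • e = e)
    (hd : g * σ g = (c * (g * σ c * g⁻¹))⁻¹)
    (hH1 : ∀ g' : G, g' * σ g' = 1 → ∃ u : G, u⁻¹ * g' * σ u = 1) :
    ∃ y : Y, μ y = y := by
  have hcoc : (c * g) * σ (c * g) = 1 := by
    rw [map_mul]
    have : c * g * (σ c * σ g) = (c * (g * σ c * g⁻¹)) * (g * σ g) := by group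
    rw [this, hd, mul_inv_cancel]
  obtain ⟨u, hu⟩ := hH1 (c * g) hcoc
  have hcg : c * g = u * (σ u)⁻¹ := by
    have := hu
    rw [mul_assoc, mul_assoc] at this
    have h2 : c * g * σ u = u := by
      have := congrArg (u * ·) this
      simpa [mul_assoc] using this
    calc c * g = c * g * σ u * (σ u)⁻¹ := by group
      _ = u * (σ u)⁻¹ := by rw [h2]
  refine ⟨u⁻¹ • e, ?_⟩
  have hμe : μ e = g⁻¹ • e := by
    conv_lhs => rw [show μ e = g⁻¹ • (g • μ e) by simp, ← hg]
  rw [hcompat, map_inv, hμe, smul_smul]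
  have key : (u * ((σ u)⁻¹ * g⁻¹)) • e = e := by
    have : u * ((σ u)⁻¹ * g⁻¹) = c := by
      rw [← mul_assoc, ← hcg]; group
    rw [this, hc]
  calc ((σ u)⁻¹ * g⁻¹) • e = u⁻¹ • (u * ((σ u)⁻¹ * g⁻¹)) • e := by
        rw [smul_smul]; group
    _ = u⁻¹ • e := by rw [key]
end

section
/- In the root lattice construction Q = ℤ⁹ / ⟨ε̃₁ + ⋯ + ε̃₉⟩ with εᵢ the images of the standard basis vectors, define Φ₀ = {εᵢ − εⱼ : i ≠ j}, Φ₁ = {εᵢ + εⱼ + ε_k : i, j, k pairwise distinct}, Φ₋₁ = −Φ₁, and Φ = Φ₀ ∪ Φ₁ ∪ Φ₋₁. Then Φ is ℤ/3ℤ-graded: for ι, κ ∈ ℤ/3ℤ with ι ≠ κ, if α ∈ Φ_ι, β ∈ Φ_κ and α + β ∈ Φ, then α + β ∈ Φ_{ι+κ}. -/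
noncomputable section

/-- The quotient Q = ℤ⁹ / ⟨ε̃₁ + ⋯ + ε̃₉⟩. -/
abbrev Q9 : Type :=
  (Fin 9 → ℤ) ⧸ Submodule.span ℤ ({fun _ => (1 : ℤ)} : Set (Fin 9 → ℤ))

/-- εᵢ : the image in Q of the i-th standard basis vector of ℤ⁹. -/
def eps (i : Fin 9) : Q9 := Submodule.Quotient.mk (Pi.single i 1)

def Phi0 : Set Q9 := {x | ∃ i j : Fin 9, i ≠ j ∧ x = eps i - eps j}

def Phi1 : Set Q9 :=
  {x | ∃ i j k : Fin 9, i ≠ j ∧ i ≠ k ∧ j ≠ k ∧ x = eps i + eps j + eps k}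

/-- Φ₋₁ = −Φ₁. -/
def PhiM1 : Set Q9 := {x | -x ∈ Phi1}

def PhiAll : Set Q9 := Phi0 ∪ Phi1 ∪ PhiM1

/-- The pieces of Φ indexed by ℤ/3ℤ. -/
def PhiGr : ZMod 3 → Set Q9 :=
  fun ι => if ι = 0 then Phi0 else if ι = 1 then Phi1 else PhiM1

def degF : (Fin 9 → ℤ) →ₗ[ℤ] ZMod 9 where
  toFun x := ((∑ i, x i : ℤ) : ZMod 9)
  map_add' x y := by
    show ((∑ i, (x i + y i) : ℤ) : ZMod 9) = _
    rw [Finset.sum_add_distrib]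
    push_cast
    ring
  map_smul' z x := by
    simp [Finset.mul_sum]

def deg : Q9 →ₗ[ℤ] ZMod 9 :=
  Submodule.liftQ _ degF (by
    rw [Submodule.span_le]
    rintro x rfl
    show degF (fun _ => 1) = 0
    simp [degF]
    decide)

lemma deg_eps (i : Fin 9) : deg (eps i) = 1 := by
  show degF (Pi.single i 1) = 1
  simp [degF, Pi.single_apply]

def d : ZMod 3 → ZMod 9 := fun ι => if ι = 0 then 0 else if ι = 1 then 3 else 6

lemma deg_Phi0 {x : Q9} (h : x ∈ Phi0) : deg x = 0 := by
  obtain ⟨i, j, -, rfl⟩ := h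
  simp [map_sub, deg_eps]

lemma deg_Phi1 {x : Q9} (h : x ∈ Phi1) : deg x = 3 := by
  obtain ⟨i, j, k, -, -, -, rfl⟩ := h
  simp [map_add, deg_eps]
  decide

lemma deg_PhiM1 {x : Q9} (h : x ∈ PhiM1) : deg x = 6 := by
  have h3 := deg_Phi1 h
  rw [map_neg] at h3
  have : deg x = -3 := by linear_combination (norm := ring_nf) -h3
  rw [this]; decide

lemma deg_PhiGr {ι : ZMod 3} {x : Q9} (h : x ∈ PhiGr ι) : deg x = d ι := by
  unfold PhiGr at h
  unfold d
  split_ifs at h ⊢ with h0 h1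
  · exact deg_Phi0 h
  · exact deg_Phi1 h
  · exact deg_PhiM1 h

lemma mem_PhiGr_of {ι : ZMod 3} {x : Q9} (hx : x ∈ PhiAll) (hd : deg x = d ι) :
    x ∈ PhiGr ι := by
  unfold PhiGr
  unfold d at hd
  rcases hx with (h | h) | h
  · have := deg_Phi0 h
    split_ifs at hd ⊢ with h0 h1 <;> first | exact h | (rw [this] at hd; exact absurd hd (by decide))
  · have := deg_Phi1 h
    split_ifs at hd ⊢ with h0 h1 <;> first | exact h | (rw [this] at hd; exact absurd hd (by decide))
  · have := deg_PhiM1 h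
    split_ifs at hd ⊢ with h0 h1 <;> first | exact h | (rw [this] at hd; exact absurd hd (by decide))

lemma d_add : ∀ ι κ : ZMod 3, d (ι + κ) = d ι + d κ ∨ ι = κ := by decide

/-- Φ = Φ₀ ∪ Φ₁ ∪ Φ₋₁ is ℤ/3ℤ-graded: for ι ≠ κ in ℤ/3ℤ,
if α ∈ Φ_ι, β ∈ Φ_κ and α + β ∈ Φ, then α + β ∈ Φ_{ι+κ}. -/
theorem Phi_graded : ∀ ι κ : ZMod 3, ι ≠ κ →
    ∀ α ∈ PhiGr ι, ∀ β ∈ PhiGr κ, α + β ∈ PhiAll → α + β ∈ PhiGr (ι + κ) := by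
  intro ι κ hne α hα β hβ hsum
  apply mem_PhiGr_of hsum
  rw [map_add, deg_PhiGr hα, deg_PhiGr hβ]
  rcases d_add ι κ with h | h
  · exact h.symm
  · exact absurd h hne
end
end
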